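/- arXiv:2303.04008 — 3 statements merged into one kernel-verified Lean document; each statement's English description precedes it below -/
import Mathlib

section
/- If P and A are real square matrices of the same size, P is symmetric positive definite, and P·A + Aᵀ·P < -I (i.e., -(PA + AᵀP + I) is positive definite), then every eigenvalue λ of A satisfies Re(λ) < 0 (A is Hurwitz). -/
/-!
If `A v = μ v` with `v ≠ 0`, then `v* (P A + Aᴴ P) v = (μ + conj μ) v* P v = 2 Re μ · v* P v`.
The Lyapunov inequality makes the left side negative and `P ≻ 0` makes `v* P v` positive,
so `Re μ < 0`. Since `v` is complex, the real hypotheses are first transported to the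
complexifications of `P` and `A`.
-/

open Matrix

open scoped ComplexOrder

namespace Matrix

variable {n : Type*} [Fintype n]

theorem re_star_dotProduct_map_ofReal_mulVec (M : Matrix n n ℝ) (v : n → ℂ) :
    (star v ⬝ᵥ M.map (↑) *ᵥ v).re =
      (fun i ↦ (v i).re) ⬝ᵥ M *ᵥ (fun i ↦ (v i).re) +
        (fun i ↦ (v i).im) ⬝ᵥ M *ᵥ (fun i ↦ (v i).im) := by
  simp only [dotProduct, mulVec, Pi.star_apply, map_apply, Complex.re_sum, Finset.mul_sum,
    Complex.mul_re, Complex.mul_im, Complex.ofReal_re, Complex.ofReal_im, RCLike.star_def,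
    Complex.conj_re, Complex.conj_im, ← Finset.sum_add_distrib]
  refine Finset.sum_congr rfl fun i _ ↦ Finset.sum_congr rfl fun j _ ↦ ?_
  ring

theorem PosDef.map_ofReal {M : Matrix n n ℝ} (hM : M.PosDef) :
    (M.map ((↑) : ℝ → ℂ)).PosDef := by
  have hMc : (M.map ((↑) : ℝ → ℂ)).IsHermitian := hM.isHermitian.map _ fun _ ↦ by simp
  refine .of_dotProduct_mulVec_pos hMc fun v hv ↦ Complex.pos_iff.mpr ⟨?_, ?_⟩
  · set x : n → ℝ := fun i ↦ (v i).re
    set y : n → ℝ := fun i ↦ (v i).im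
    have hxy : x ≠ 0 ∨ y ≠ 0 := by
      by_contra! h
      exact hv (funext fun i ↦ Complex.ext (congrFun h.1 i) (congrFun h.2 i))
    have hx := hM.posSemidef.dotProduct_mulVec_nonneg x
    have hy := hM.posSemidef.dotProduct_mulVec_nonneg y
    rw [re_star_dotProduct_map_ofReal_mulVec]
    rcases hxy with hx0 | hy0
    · have := hM.dotProduct_mulVec_pos hx0
      simp only [star_trivial] at this hx hy
      linarith
    · have := hM.dotProduct_mulVec_pos hy0
      simp only [star_trivial] at this hx hy
      linarith
  · exact (hMc.im_star_dotProduct_mulVec_self v).symm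

theorem star_dotProduct_mul_add_conjTranspose_mul_mulVec {P A : Matrix n n ℂ} {μ : ℂ}
    {v : n → ℂ} (hAv : A *ᵥ v = μ • v) :
    star v ⬝ᵥ (P * A + Aᴴ * P) *ᵥ v = (2 * μ.re : ℝ) * (star v ⬝ᵥ P *ᵥ v) := by
  have hvA : star v ᵥ* Aᴴ = star μ • star v := by rw [← star_mulVec, hAv, star_smul]
  rw [add_mulVec, dotProduct_add, ← mulVec_mulVec, ← mulVec_mulVec,
    dotProduct_mulVec (star v) Aᴴ, hvA, hAv, mulVec_smul, dotProduct_smul, smul_dotProduct,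
    ← Complex.add_conj]
  simp only [smul_eq_mul, RCLike.star_def]
  ring

theorem re_lt_zero_of_posDef_neg_mul_add_conjTranspose_mul {P A : Matrix n n ℂ}
    (hP : P.PosDef) (hPA : (-(P * A + Aᴴ * P)).PosDef) {μ : ℂ} {v : n → ℂ} (hv : v ≠ 0)
    (hAv : A *ᵥ v = μ • v) : μ.re < 0 := by
  have hq := (Complex.pos_iff.mp (hP.dotProduct_mulVec_pos hv)).1
  have hneg := (Complex.pos_iff.mp (hPA.dotProduct_mulVec_pos hv)).1
  rw [neg_mulVec, dotProduct_neg, star_dotProduct_mul_add_conjTranspose_mul_mulVec hAv,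
    Complex.neg_re, Complex.re_ofReal_mul] at hneg
  nlinarith

end Matrix

/-- Lyapunov inequality implies Hurwitz: if P ≻ 0 symmetric and PA + AᵀP + I ≺ 0,
then every complex eigenvalue of A has negative real part. -/
theorem lyapunov_hurwitz (m : ℕ)
    (P A : Matrix (Fin m) (Fin m) ℝ)
    (hP : P.PosDef)
    (hLyap : (-(P * A + Aᵀ * P + 1)).PosDef) :
    ∀ (μ : ℂ) (v : Fin m → ℂ), v ≠ 0 →
      (A.map Complex.ofReal).mulVec v = μ • v → μ.re < 0 := by
  intro μ v hv hAv
  have hPA : (-(P.map (↑) * A.map (↑) + (A.map (↑))ᴴ * P.map (↑)) : Matrix _ _ ℂ).PosDef := by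
    convert hLyap.map_ofReal.add_posSemidef PosSemidef.one using 1
    rw [← conjTranspose_eq_transpose_of_trivial, ← conjTranspose_map _ fun _ ↦ by simp,
      show (Complex.ofReal : ℝ → ℂ) = Complex.ofRealHom from rfl]
    simp only [← RingHom.mapMatrix_apply, map_neg, map_add, map_mul, map_one]
    abel
  exact re_lt_zero_of_posDef_neg_mul_add_conjTranspose_mul hP.map_ofReal hPA hv hAv
end

section
/- Under the hypotheses that P ≻ 0 with P12 invertible and P22 ≻ 0, the matrix H = −P22 P12⁻¹ P11 + P12ᵀ is invertible. -/
open Matrix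

/-- Under P ≻ 0 with P12 invertible and P22 ≻ 0, the matrix
H = −P22 P12⁻¹ P11 + P12ᵀ is invertible. -/
theorem H_invertible (n : ℕ) (hn : 0 < n)
    (P11 P12 P22 : Matrix (Fin n) (Fin n) ℝ)
    (hP : (Matrix.fromBlocks P11 P12 P12ᵀ P22).PosDef)
    (hP12 : IsUnit P12.det)
    (hP22 : P22.PosDef) :
    IsUnit (-P22 * P12⁻¹ * P11 + P12ᵀ).det := by
  have h22 : IsUnit P22.det := hP22.det_pos.ne'.isUnit
  have := P22.invertibleOfIsUnitDet h22
  have hS : IsUnit (P11 - P12 * P22⁻¹ * P12ᵀ).det := by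
    have hdet := hP.det_pos
    rw [Matrix.det_fromBlocks₂₂, Matrix.invOf_eq_nonsing_inv] at hdet
    rcases mul_pos_iff.mp hdet with h | h
    · exact h.2.ne'.isUnit
    · linarith [hP22.det_pos, h.1]
  have hfact : -P22 * P12⁻¹ * P11 + P12ᵀ
      = (-P22 * P12⁻¹) * (P11 - P12 * P22⁻¹ * P12ᵀ) := by
    rw [Matrix.mul_sub]
    have h1 : P12⁻¹ * P12 = 1 := Matrix.nonsing_inv_mul _ hP12
    have h2 : P22 * P22⁻¹ = 1 := Matrix.mul_nonsing_inv _ h22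
    rw [show -P22 * P12⁻¹ * (P12 * P22⁻¹ * P12ᵀ)
        = -(P22 * (P12⁻¹ * P12) * P22⁻¹ * P12ᵀ) by noncomm_ring,
      h1, Matrix.mul_one, h2, Matrix.one_mul]
    rw [sub_neg_eq_add]
  rw [hfact, Matrix.det_mul, Matrix.det_mul]
  refine ((?_ : IsUnit (-P22).det).mul (P12.isUnit_nonsing_inv_det hP12)).mul hS
  rw [Matrix.det_neg, Fintype.card_fin]
  exact (isUnit_one.neg.pow n).mul h22
end

section
/- Let V : ℝ≥0 → ℝ be continuously differentiable, nonnegative, with V' (t) ≤ −c·√(V t) for a constant c > 0 wherever V t > 0. Then V reaches zero in finite time: there exists t₀ ≤ 2√(V 0)/c such that V t₀ = 0, and V t = 0 for all t ≥ t₀ (assuming V remains nonincreasing). -/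
/-!
Along a solution of `V' ≤ -c √V` that stays positive, `√V` decreases at rate at least `c / 2`,
since `(√V)' = V' / (2 √V) ≤ -c / 2`. So `V` cannot stay positive on all of `[0, 2 √(V 0) / c]`;
being nonnegative and nonincreasing, it vanishes from that time on.
-/

open Real Set

theorem antitoneOn_sqrt_add_mul_of_deriv_le {V : ℝ → ℝ} {D : Set ℝ} {c : ℝ} (hD : Convex ℝ D)
    (hcont : ContinuousOn V D) (hdiff : DifferentiableOn ℝ V (interior D))
    (hpos : ∀ t ∈ interior D, 0 < V t)
    (hderiv : ∀ t ∈ interior D, deriv V t ≤ -c * √(V t)) :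
    AntitoneOn (fun t => √(V t) + c / 2 * t) D := by
  have hasDeriv : ∀ t ∈ interior D, HasDerivAt (fun t => √(V t) + c / 2 * t)
      (deriv V t / (2 * √(V t)) + c / 2) t := fun t ht => by
    have hV : HasDerivAt V (deriv V t) t :=
      ((hdiff t ht).differentiableAt (isOpen_interior.mem_nhds ht)).hasDerivAt
    simpa only [mul_one] using
      (hV.sqrt (hpos t ht).ne').fun_add ((hasDerivAt_id' t).const_mul (c / 2))
  refine antitoneOn_of_deriv_nonpos hD
    (hcont.sqrt.add (continuousOn_const.mul continuousOn_id))
    (fun t ht => (hasDeriv t ht).differentiableAt.differentiableWithinAt) fun t ht => ?_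
  have hrate : deriv V t / (2 * √(V t)) ≤ -c / 2 := by
    rw [div_le_iff₀ (by linarith [sqrt_pos.2 (hpos t ht)])]
    linarith [hderiv t ht]
  rw [(hasDeriv t ht).deriv]
  linarith

theorem sqrt_le_sqrt_sub_of_deriv_le {V : ℝ → ℝ} {a b c : ℝ} (hab : a ≤ b)
    (hcont : ContinuousOn V (Icc a b)) (hdiff : DifferentiableOn ℝ V (Ioo a b))
    (hpos : ∀ t ∈ Ioo a b, 0 < V t) (hderiv : ∀ t ∈ Ioo a b, deriv V t ≤ -c * √(V t)) :
    √(V b) ≤ √(V a) - c / 2 * (b - a) := by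
  rw [← interior_Icc] at hdiff hpos hderiv
  have := antitoneOn_sqrt_add_mul_of_deriv_le (convex_Icc a b) hcont hdiff hpos hderiv
    (left_mem_Icc.2 hab) (right_mem_Icc.2 hab) hab
  linarith

/-- Finite-time convergence: if V is C¹, nonnegative and nonincreasing on [0, ∞),
and V'(t) ≤ −c√(V t) wherever V t > 0, then V reaches zero no later than
t₀ = 2√(V 0)/c and stays at zero. -/
theorem finite_time_convergence (V : ℝ → ℝ) (c : ℝ) (hc : 0 < c)
    (hV1 : ContDiff ℝ 1 V)
    (hVnonneg : ∀ t, 0 ≤ t → 0 ≤ V t)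
    (hVdec : AntitoneOn V (Set.Ici (0 : ℝ)))
    (hVdiff : ∀ t, 0 ≤ t → 0 < V t → deriv V t ≤ -c * Real.sqrt (V t)) :
    ∃ t₀ : ℝ, 0 ≤ t₀ ∧ t₀ ≤ 2 * Real.sqrt (V 0) / c ∧ V t₀ = 0 ∧
      ∀ t, t₀ ≤ t → V t = 0 := by
  set T := 2 * √(V 0) / c
  have hT : 0 ≤ T := by positivity
  have hVT : V T = 0 := by
    by_contra hne
    have hpos : ∀ t ∈ Icc 0 T, 0 < V t := fun t ht =>
      ((hVnonneg T hT).lt_of_ne' hne).trans_le (hVdec ht.1 hT ht.2)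
    have hdecay := sqrt_le_sqrt_sub_of_deriv_le hT hV1.continuous.continuousOn
      (hV1.differentiable one_ne_zero).differentiableOn
      (fun t ht => hpos t (Ioo_subset_Icc_self ht))
      (fun t ht => hVdiff t ht.1.le (hpos t (Ioo_subset_Icc_self ht)))
    have hreach : c / 2 * (T - 0) = √(V 0) := by
      simp only [T, sub_zero]
      field_simp
    linarith [sqrt_pos.2 (hpos T (right_mem_Icc.2 hT))]
  refine ⟨T, hT, le_rfl, hVT, fun t ht => ?_⟩
  exact le_antisymm (hVT ▸ hVdec hT (hT.trans ht) ht) (hVnonneg t (hT.trans ht))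
end
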